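/- Let β, γ ∈ ℝ with (β, γ) ≠ (0, 0), and consider the conics 𝒞 : y = x² and Γ : y = x² + βxy + γy² in ℝ² (these are distinct smooth conics whose contact at the origin has order at least 3). Then there is no closed polygonal line inscribed in Γ and circumscribed about 𝒞. -/

import Mathlib

open Filter Topology

/-- A conic in `ℝ²`, given by the six coefficients of a quadratic polynomial
`a x² + b x y + c y² + d x + e y + f`. -/
structure Conic where
  a : ℝ
  b : ℝ
  c : ℝ
  d : ℝ
  e : ℝ
  f : ℝ

namespace Conic

/-- Value of the defining quadratic polynomial at a point of `ℝ²`. -/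
def eval (Q : Conic) (p : ℝ × ℝ) : ℝ :=
  Q.a * p.1 ^ 2 + Q.b * p.1 * p.2 + Q.c * p.2 ^ 2 + Q.d * p.1 + Q.e * p.2 + Q.f

/-- The conic as a subset of `ℝ²`. -/
def zeroSet (Q : Conic) : Set (ℝ × ℝ) := {p | Q.eval p = 0}

/-- Gradient of the defining polynomial. -/
def grad (Q : Conic) (p : ℝ × ℝ) : ℝ × ℝ :=
  (2 * Q.a * p.1 + Q.b * p.2 + Q.d, Q.b * p.1 + 2 * Q.c * p.2 + Q.e)

/-- A smooth conic: the polynomial has total degree two, the zero set is nonempty,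
and the gradient is nonzero at every point of the zero set. -/
def IsSmooth (Q : Conic) : Prop :=
  ¬ (Q.a = 0 ∧ Q.b = 0 ∧ Q.c = 0) ∧ Q.zeroSet.Nonempty ∧ ∀ p ∈ Q.zeroSet, Q.grad p ≠ 0

/-- `P` is an inside point of the conic: `P` is off the conic and every line through `P`
meets the conic in two distinct points. -/
def Inside (Q : Conic) (P : ℝ × ℝ) : Prop :=
  P ∉ Q.zeroSet ∧ ∀ v : ℝ × ℝ, v ≠ 0 →
    ∃ t₁ t₂ : ℝ, t₁ ≠ t₂ ∧ (P + t₁ • v) ∈ Q.zeroSet ∧ (P + t₂ • v) ∈ Q.zeroSet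

/-- `P` is an outside point of the conic: off the conic and not an inside point. -/
def Outside (Q : Conic) (P : ℝ × ℝ) : Prop := P ∉ Q.zeroSet ∧ ¬ Q.Inside P

/-- The line through `A` and `B` is tangent to the conic: the restriction of the defining
polynomial to an affine parametrization of the line is a nonzero multiple of a perfect
square, i.e. the line meets the conic in exactly one point, which is a double root. -/
def Tangent (Q : Conic) (A B : ℝ × ℝ) : Prop :=
  A ≠ B ∧ ∃ q t₀ : ℝ, q ≠ 0 ∧ ∀ t : ℝ, Q.eval (A + t • (B - A)) = q * (t - t₀) ^ 2

end Conic

/-- The line through two (distinct) points of `ℝ²`, as a set. -/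
def lineThrough (A B : ℝ × ℝ) : Set (ℝ × ℝ) := {p | ∃ t : ℝ, p = A + t • (B - A)}

/-- A subset of `ℝ²` is a line. -/
def IsLine (L : Set (ℝ × ℝ)) : Prop :=
  ∃ u v w : ℝ, ¬ (u = 0 ∧ v = 0) ∧ L = {p : ℝ × ℝ | u * p.1 + v * p.2 + w = 0}

/-- The parabola `𝒞 : y = x²`, with defining polynomial `x² − y`. -/
def parabolaC : Conic := ⟨1, 0, 0, 0, -1, 0⟩

/-- The conic `Γ : y = x² + β x y + γ y²`, with defining polynomial
`x² + β x y + γ y² − y`. -/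
def conicGamma (β γ : ℝ) : Conic := ⟨1, β, γ, 0, -1, 0⟩

lemma smul_line (P Q : ℝ × ℝ) (t : ℝ) :
    P + t • (Q - P) = (P.1 + t*(Q.1 - P.1), P.2 + t*(Q.2 - P.2)) := rfl

lemma quad_roots {c2 c1 c0 a b c : ℝ} (h : ¬(c2 = 0 ∧ c1 = 0 ∧ c0 = 0))
    (ha : c2*a^2 + c1*a + c0 = 0) (hb : c2*b^2 + c1*b + c0 = 0)
    (hc : c2*c^2 + c1*c + c0 = 0) (hab : a ≠ b) : c = a ∨ c = b := by
  by_contra hco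
  push_neg at hco
  obtain ⟨hca, hcb⟩ := hco
  have e1 : c2*(a+b) + c1 = 0 := by
    have h' : (a - b) * (c2*(a+b) + c1) = 0 := by linear_combination ha - hb
    rcases mul_eq_zero.mp h' with h'' | h''
    · exact absurd (sub_eq_zero.mp h'') hab
    · exact h''
  have e2 : c2*(a+c) + c1 = 0 := by
    have h' : (a - c) * (c2*(a+c) + c1) = 0 := by linear_combination ha - hc
    rcases mul_eq_zero.mp h' with h'' | h''
    · exact absurd (sub_eq_zero.mp h'').symm hca
    · exact h''
  have hc2 : c2 = 0 := by
    have h' : (b - c) * c2 = 0 := by linear_combination e1 - e2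
    rcases mul_eq_zero.mp h' with h'' | h''
    · exact absurd (sub_eq_zero.mp h'').symm hcb
    · exact h''
  have hc1 : c1 = 0 := by linear_combination e1 - (a+b)*hc2
  have hc0 : c0 = 0 := by linear_combination ha - a^2*hc2 - a*hc1
  exact h ⟨hc2, hc1, hc0⟩

lemma tangent_s {P Q : ℝ × ℝ} (h : parabolaC.Tangent P Q) :
    Q.1 - P.1 ≠ 0 ∧ ∃ σ : ℝ, Q.2 - P.2 = 2*(Q.1 - P.1)*σ ∧
      σ^2 - 2*P.1*σ + P.2 = 0 ∧ σ^2 - 2*Q.1*σ + Q.2 = 0 := by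
  obtain ⟨hPQ, q, t₀, hq, heq⟩ := h
  have heq' : ∀ t : ℝ, (P.1 + t*(Q.1-P.1))^2 - (P.2 + t*(Q.2-P.2)) = q*(t-t₀)^2 := by
    intro t
    have h0 := heq t
    rw [smul_line] at h0
    simp only [parabolaC, Conic.eval] at h0
    linear_combination h0
  have hdx2 : (Q.1 - P.1)^2 = q := by
    linear_combination (heq' (t₀+1) + heq' (t₀-1) - 2*heq' t₀)/2
  have hdx : Q.1 - P.1 ≠ 0 := fun h0 => hq (by rw [← hdx2, h0]; ring)
  refine ⟨hdx, P.1 + t₀*(Q.1 - P.1), ?_, ?_, ?_⟩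
  · linear_combination heq' 0 - heq' 1 + (1 - 2*t₀)*hdx2
  · linear_combination t₀^2 * hdx2 - heq' 0
  · linear_combination (t₀-1)^2*hdx2 - heq' 1

lemma line_graph {s : ℝ} {P Q : ℝ × ℝ} (hPQ : P ≠ Q)
    (hP : P.2 = 2*s*P.1 - s^2) (hQ : Q.2 = 2*s*Q.1 - s^2) :
    lineThrough P Q = {p : ℝ × ℝ | p.2 = 2*s*p.1 - s^2} := by
  have hx : Q.1 - P.1 ≠ 0 := by
    intro h0
    apply hPQ
    have h1 : P.1 = Q.1 := by have := sub_eq_zero.mp h0; linarith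
    exact Prod.ext h1 (by rw [hP, hQ, h1])
  ext p
  simp only [lineThrough, Set.mem_setOf_eq]
  constructor
  · rintro ⟨t, rfl⟩
    rw [smul_line]
    simp only
    rw [hP, hQ]
    ring
  · intro hp
    refine ⟨(p.1 - P.1)/(Q.1 - P.1), ?_⟩
    rw [smul_line]
    have e1 : p.1 = P.1 + (p.1 - P.1)/(Q.1-P.1)*(Q.1-P.1) := by field_simp; ring
    have e2 : p.2 = P.2 + (p.1 - P.1)/(Q.1-P.1)*(Q.2-P.2) := by
      rw [hp, hP, hQ]; field_simp; ring
    exact Prod.ext e1 e2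


/-- For `(β, γ) ≠ (0, 0)`, the conics `𝒞 : y = x²` and
`Γ : y = x² + β x y + γ y²` (which have contact of order at least three at the origin) admit
no closed polygonal line inscribed in `Γ` and circumscribed about `𝒞`. -/
theorem statement7 (β γ : ℝ) (h : (β, γ) ≠ (0, 0)) :
    ¬ ∃ (n : ℕ) (A : ℕ → ℝ × ℝ), 0 < n ∧
        (∀ k, A (k + n) = A k) ∧
        (∀ k, A k ∈ (conicGamma β γ).zeroSet) ∧
        (∀ k, parabolaC.Tangent (A k) (A (k + 1))) ∧
        (∀ k, lineThrough (A k) (A (k + 1)) ≠ lineThrough (A (k + 1)) (A (k + 2))) := by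
  rintro ⟨n, A, hn, hper, hΓ, htan, hline⟩
  -- Γ equation in coordinates
  have hΓ' : ∀ k, ((A k).1)^2 + β*(A k).1*(A k).2 + γ*((A k).2)^2 - (A k).2 = 0 := by
    intro k
    have := hΓ k
    simp only [conicGamma, Conic.zeroSet, Conic.eval, Set.mem_setOf_eq] at this
    linear_combination this
  -- the tangency abscissa of side k
  set s : ℕ → ℝ := fun k => ((A (k+1)).2 - (A k).2) / (2*((A (k+1)).1 - (A k).1)) with hs_def
  have hkey : ∀ k, ((A (k+1)).1 - (A k).1 ≠ 0) ∧
      (s k)^2 - 2*(A k).1*(s k) + (A k).2 = 0 ∧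
      (s k)^2 - 2*(A (k+1)).1*(s k) + (A (k+1)).2 = 0 := by
    intro k
    obtain ⟨hdx, σ, hdy, h1, h2⟩ := tangent_s (htan k)
    have hs : s k = σ := by
      rw [hs_def]
      field_simp
      linarith [hdy]
    exact ⟨hdx, by rw [hs]; exact h1, by rw [hs]; exact h2⟩
  have hAne : ∀ k, A k ≠ A (k+1) := fun k => (htan k).1
  -- each s k is nonzero
  have hsne0 : ∀ k, s k ≠ 0 := by
    intro k h0
    have h1 := (hkey k).2.1
    have h2 := (hkey k).2.2
    rw [h0] at h1 h2
    have hy1 : (A k).2 = 0 := by linarith [h1]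
    have hy2 : (A (k+1)).2 = 0 := by linarith [h2]
    have g1 := hΓ' k
    have g2 := hΓ' (k+1)
    rw [hy1] at g1
    rw [hy2] at g2
    have hx1 : (A k).1 = 0 := by nlinarith [g1]
    have hx2 : (A (k+1)).1 = 0 := by nlinarith [g2]
    exact (hkey k).1 (by rw [hx1, hx2]; ring)
  -- side k is the tangent line at abscissa s k
  have honA : ∀ k, (A k).2 = 2*(s k)*(A k).1 - (s k)^2 := by
    intro k; have := (hkey k).2.1; linarith
  have honB : ∀ k, (A (k+1)).2 = 2*(s k)*(A (k+1)).1 - (s k)^2 := by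
    intro k; have := (hkey k).2.2; linarith
  have hline_eq : ∀ k, lineThrough (A k) (A (k+1)) =
      {p : ℝ × ℝ | p.2 = 2*(s k)*p.1 - (s k)^2} :=
    fun k => line_graph (hAne k) (honA k) (honB k)
  -- consecutive tangency abscissae differ
  have hsnee : ∀ k, s (k+1) ≠ s k := by
    intro k he
    apply hline k
    rw [hline_eq k, hline_eq (k+1), he]
  -- abscissae two apart differ
  have hsnee2 : ∀ k, s (k+2) ≠ s k := by
    intro k he
    have hσ := hsne0 k
    -- A k, A (k+1), A (k+2) all lie on the tangent line at s k, hence roots of a quadratic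
    have hroot : ∀ j : ℕ, (A j).2 = 2*(s k)*(A j).1 - (s k)^2 →
        (1 + 2*β*(s k) + 4*γ*(s k)^2)*((A j).1)^2
          + (-(β*(s k)^2) - 4*γ*(s k)^3 - 2*(s k))*((A j).1)
          + (γ*(s k)^4 + (s k)^2) = 0 := by
      intro j hy
      have g := hΓ' j
      rw [hy] at g
      linear_combination g
    have hnz : ¬((1 + 2*β*(s k) + 4*γ*(s k)^2) = 0 ∧
        (-(β*(s k)^2) - 4*γ*(s k)^3 - 2*(s k)) = 0 ∧ (γ*(s k)^4 + (s k)^2) = 0) := by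
      rintro ⟨h2, h1, h0⟩
      have hσ2 : (s k)^2 ≠ 0 := pow_ne_zero _ hσ
      have hγ' : γ*(s k)^2 = -1 := by
        have : (s k)^2 * (γ*(s k)^2 + 1) = 0 := by linear_combination h0
        rcases mul_eq_zero.mp this with h' | h'
        · exact absurd h' hσ2
        · linarith
      have hβ' : β*(s k) = 2 := by
        have : (s k) * (β*(s k) + 4*γ*(s k)^2 + 2) = 0 := by linear_combination -h1
        rcases mul_eq_zero.mp this with h' | h'
        · exact absurd h' hσ
        · nlinarith [hγ']
      have : (1:ℝ) = 0 := by linear_combination h2 - 2*hβ' - 4*hγ'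
      exact one_ne_zero this
    have hA2 : (A (k+2)).2 = 2*(s k)*(A (k+2)).1 - (s k)^2 := by
      have := honA (k+2); rw [he] at this; exact this
    have r0 := hroot k (honA k)
    have r1 := hroot (k+1) (honB k)
    have r2 := hroot (k+2) hA2
    have hxne : (A k).1 ≠ (A (k+1)).1 := by
      intro h'; exact (hkey k).1 (by rw [h']; ring)
    rcases quad_roots hnz r0 r1 r2 hxne with hx | hx
    · -- A (k+2) = A k : then side k+1 equals side k
      have hAA : A (k+2) = A k := Prod.ext hx (by rw [hA2, honA k, hx])
      apply hline k
      rw [hline_eq k]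
      rw [show lineThrough (A (k+1)) (A (k+2)) = lineThrough (A (k+1)) (A k) by rw [hAA]]
      exact (line_graph (fun h' => hAne k h'.symm) (honB k) (honA k)).symm
    · -- A (k+2) = A (k+1) : contradicts tangency of side k+1
      have hAA : A (k+2) = A (k+1) := Prod.ext hx (by rw [hA2, honB k, hx])
      exact hAne (k+1) hAA.symm
  -- Vieta at the vertex A (k+1)
  have hvieta : ∀ k, (A (k+1)).1 = (s k + s (k+1))/2 ∧ (A (k+1)).2 = s k * s (k+1) := by
    intro k
    have h2 := (hkey k).2.2
    have h1 := (hkey (k+1)).2.1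
    have hsum : (A (k+1)).1 = (s k + s (k+1))/2 := by
      have hd : (s k - s (k+1)) * (s k + s (k+1) - 2*(A (k+1)).1) = 0 := by
        linear_combination h2 - h1
      rcases mul_eq_zero.mp hd with h' | h'
      · exact absurd (sub_eq_zero.mp h').symm (hsnee k)
      · linarith
    refine ⟨hsum, ?_⟩
    have hsum' : 2*(A (k+1)).1 = s k + s (k+1) := by linarith
    linear_combination h2 + (s k) * hsum'
  -- the key polynomial relation between consecutive abscissae
  have hrel : ∀ k, (s (k+1) - s k)^2 + 2*β*(s k)*(s (k+1))*(s k + s (k+1))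
      + 4*γ*(s k)^2*(s (k+1))^2 = 0 := by
    intro k
    obtain ⟨hx, hy⟩ := hvieta k
    have hG := hΓ' (k+1)
    rw [hx, hy] at hG
    linear_combination 4*hG
  -- pass to inverses
  set p : ℕ → ℝ := fun k => (s k)⁻¹ with hp_def
  have hE : ∀ k, (p (k+1) - p k)^2 + 2*β*(p k + p (k+1)) + 4*γ = 0 := by
    intro k
    have h1 := hsne0 k
    have h2 := hsne0 (k+1)
    have key : (p (k+1) - p k)^2 + 2*β*(p k + p (k+1)) + 4*γ
        = ((s (k+1) - s k)^2 + 2*β*(s k)*(s (k+1))*(s k + s (k+1))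
            + 4*γ*(s k)^2*(s (k+1))^2) / ((s k)^2*(s (k+1))^2) := by
      rw [hp_def]
      field_simp
      ring
    rw [key, hrel k, zero_div]
  have hpne : ∀ k, p (k+1) ≠ p k := by
    intro k h'
    exact hsnee k (inv_injective h')
  have hpne2 : ∀ k, p (k+2) ≠ p k := by
    intro k h'
    exact hsnee2 k (inv_injective h')
  -- periodicity of s, hence of p
  have hper_s : ∀ k, s (k+n) = s k := by
    intro k
    have e1 : A (k+n) = A k := hper k
    have e2 : A (k+n+1) = A (k+1) := by
      have : k + n + 1 = (k+1) + n := by omega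
      rw [this]; exact hper (k+1)
    rw [hs_def]
    simp only [e1, e2]
  have hper_p : ∀ k, p (k+n) = p k := fun k => by rw [hp_def]; simp only [hper_s k]
  by_cases hβ : β = 0
  · -- β = 0 : differences are constant and nonzero
    subst hβ
    have hd : ∀ k, p (k+1) - p k = p 1 - p 0 := by
      intro k
      induction k with
      | zero => rfl
      | succ m ih =>
        have e1 := hE m
        have e2 := hE (m+1)
        have : (p (m+1+1) - p (m+1) - (p (m+1) - p m)) * (p (m+1+1) - p m) = 0 := by
          linear_combination e2 - e1
        rcases mul_eq_zero.mp this with h' | h'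
        · rw [← ih]; linarith [sub_eq_zero.mp h']
        · exact absurd (sub_eq_zero.mp h') (hpne2 m)
    have hlin : ∀ k : ℕ, p k = p 0 + k * (p 1 - p 0) := by
      intro k
      induction k with
      | zero => simp
      | succ m ih =>
        have := hd m
        push_cast
        push_cast at ih
        linarith
    have h0 := hper_p 0
    simp only [Nat.zero_add] at h0
    rw [hlin n] at h0
    have hnne : (n:ℝ) ≠ 0 := Nat.cast_ne_zero.mpr hn.ne'
    have : p 1 - p 0 = 0 := by
      have : (n:ℝ) * (p 1 - p 0) = 0 := by linarith
      rcases mul_eq_zero.mp this with h' | h'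
      · exact absurd h' hnne
      · exact h'
    exact hpne 0 (by linarith [sub_eq_zero.mp this])
  · -- β ≠ 0 : differences decrease by 2β each step
    have hd : ∀ k : ℕ, p (k+1) - p k = (p 1 - p 0) - 2*β*k := by
      intro k
      induction k with
      | zero => simp
      | succ m ih =>
        have e1 := hE m
        have e2 := hE (m+1)
        have key : (p (m+1+1) - p m) * ((p (m+1+1) - p (m+1)) - (p (m+1) - p m) + 2*β) = 0 := by
          linear_combination e2 - e1
        rcases mul_eq_zero.mp key with h' | h'
        · exact absurd (sub_eq_zero.mp h') (hpne2 m)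
        · push_cast
          push_cast at ih
          linarith
    have h0 := hper_p 0
    simp only [Nat.zero_add] at h0
    have h1 : p (n+1) = p 1 := by
      have : n + 1 = 1 + n := by omega
      rw [this]; exact hper_p 1
    have hdn := hd n
    have hd0 := hd 0
    rw [h0, h1] at hdn
    simp at hd0
    have hnne : (n:ℝ) ≠ 0 := Nat.cast_ne_zero.mpr hn.ne'
    have : 2*β*(n:ℝ) = 0 := by linarith
    rcases mul_eq_zero.mp this with h' | h'
    · rcases mul_eq_zero.mp h' with h'' | h''
      · norm_num at h''
      · exact hβ h''
    · exact hnne h'
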